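/- Let V be a finitistic representation of Ã_ℝ. Then there exist a finite partition 𝒫 of S¹ with |𝒫| ≥ 2 into path-connected parts and a representative point x_P ∈ P for each P ∈ 𝒫 such that: (a) whenever g_{x,y} is a generating morphism with x and y in the same part P, the map V(x,y) is an isomorphism; and (b) the refinement U of V — the representation defined by U(x) = V(x_P) for x ∈ P and U(x,y) = V(x_P, x_{P'}) for x ∈ P, y ∈ P' — is isomorphic to V. -/

import Mathlib

open Set

noncomputable section

/-- A continuous quiver of type Ã: the data of the (even) set `S` of sinks/sources
on the circle, described via the cardinality `2*m`-ish data `m` and the angles `α`.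
When `m = 0` we are in the cyclic case and fix `α j = π j`. -/
structure AtR where
  m : ℕ
  α : ℤ → ℝ
  mono : StrictMono α
  cyc : m = 0 → ∀ j : ℤ, α j = Real.pi * j
  per : m ≠ 0 → ∀ j : ℤ, α (j + 2 * m) = α j + 2 * Real.pi
  base0 : 0 ≤ α 0
  base1 : α 0 < 2 * Real.pi

namespace AtR

variable (Q : AtR)

/-- `covRel θ φ` holds iff there is a morphism `e^{iθ} → e^{iφ}` in the continuous
quiver of type Ã, presented on the universal cover `ℝ` of the circle.
In the cyclic case (`m = 0`) morphisms go counterclockwise, i.e. `θ ≤ φ`;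
otherwise a morphism stays within one (lifted) arc `[α j, α (j+1)]` and goes
down on even arcs (towards the sink `α j`) and up on odd arcs. -/
def covRel (θ φ : ℝ) : Prop :=
  if Q.m = 0 then θ ≤ φ
  else ∃ j : ℤ, θ ∈ Set.Icc (Q.α j) (Q.α (j + 1)) ∧ φ ∈ Set.Icc (Q.α j) (Q.α (j + 1)) ∧
    ((Even j ∧ φ ≤ θ) ∨ (¬ Even j ∧ θ ≤ φ))

variable {Q}

lemma arcs_overlap {j j' : ℤ} {x : ℝ}
    (hj : x ∈ Set.Icc (Q.α j) (Q.α (j + 1))) (hj' : x ∈ Set.Icc (Q.α j') (Q.α (j' + 1)))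
    (hne : j ≠ j') :
    (j' = j + 1 ∧ x = Q.α (j + 1)) ∨ (j = j' + 1 ∧ x = Q.α j) := by
  rcases lt_or_gt_of_ne hne with h | h
  · left
    have h1 : j + 1 ≤ j' := by omega
    have h2 : Q.α (j + 1) ≤ Q.α j' := Q.mono.monotone h1
    have hx : x = Q.α (j + 1) := le_antisymm hj.2 (le_trans h2 hj'.1)
    have hx2 : Q.α (j + 1) = Q.α j' := le_antisymm h2 (hx ▸ hj'.1)
    exact ⟨(Q.mono.injective hx2).symm, hx⟩
  · right
    have h1 : j' + 1 ≤ j := by omega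
    have h2 : Q.α (j' + 1) ≤ Q.α j := Q.mono.monotone h1
    have hx : x = Q.α (j' + 1) := le_antisymm hj'.2 (le_trans h2 hj.1)
    have hx2 : Q.α (j' + 1) = Q.α j := le_antisymm h2 (hx ▸ hj.1)
    exact ⟨Q.mono.injective hx2.symm, hx.trans hx2⟩

/-- Key lemma: if there are morphisms `θ → φ` and `φ → ψ` then `φ` lies in the
convex hull of `{θ, ψ}`. -/
lemma covRel_hull {θ φ ψ : ℝ} (h1 : Q.covRel θ φ) (h2 : Q.covRel φ ψ) :
    min θ ψ ≤ φ ∧ φ ≤ max θ ψ := by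
  unfold covRel at h1 h2
  by_cases hm : Q.m = 0
  · rw [if_pos hm] at h1 h2
    exact ⟨le_trans (min_le_left _ _) h1, le_trans h2 (le_max_right _ _)⟩
  · rw [if_neg hm] at h1 h2
    obtain ⟨j, hθ, hφ, hp⟩ := h1
    obtain ⟨j2, hφ2, hψ, hp2⟩ := h2
    by_cases hjj : j = j2
    · subst hjj
      rcases hp with ⟨he, hle⟩ | ⟨ho, hle⟩ <;> rcases hp2 with ⟨he2, hle2⟩ | ⟨ho2, hle2⟩
      · exact ⟨le_trans (min_le_right _ _) hle2, le_trans hle (le_max_left _ _)⟩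
      · exact absurd he ho2
      · exact absurd he2 ho
      · exact ⟨le_trans (min_le_left _ _) hle, le_trans hle2 (le_max_right _ _)⟩
    · rcases arcs_overlap hφ hφ2 hjj with ⟨hj2, hφe⟩ | ⟨hj2, hφe⟩
      · -- j2 = j + 1, φ = α (j+1)
        rcases hp with ⟨he, hle⟩ | ⟨ho, hle⟩
        · -- Even j, φ ≤ θ and θ ≤ α (j+1) = φ so θ = φ
          have hθφ : θ = φ := le_antisymm (hφe ▸ hθ.2) hle
          rw [← hθφ]
          exact ⟨min_le_left _ _, le_max_left _ _⟩
        · -- Odd j so j2 = j+1 is even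
          have he2 : Even j2 := by
            rw [hj2]; rcases Int.even_or_odd j with h | h
            · exact absurd h ho
            · exact h.add_one
          rcases hp2 with ⟨_, hle2⟩ | ⟨ho2, _⟩
          · -- ψ ≤ φ, but φ = α j2 is the bottom of the arc of j2, so ψ = φ
            have hψφ : ψ = φ := by
              have : Q.α j2 ≤ ψ := hψ.1
              have hb : φ = Q.α j2 := by rw [hj2]; exact hφe
              linarith [hb ▸ this]
            rw [← hψφ]
            exact ⟨min_le_right _ _, le_max_right _ _⟩
          · exact absurd he2 ho2
      · -- j = j2 + 1, φ = α j
        rcases hp2 with ⟨he2, hle2⟩ | ⟨ho2, hle2⟩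
        · -- Even j2, ψ ≤ φ; φ = α j = α (j2+1) is the top of arc j2... and j odd
          have ho : ¬ Even j := by
            rw [hj2]; intro h
            exact (Int.even_add_one.mp h) he2
          rcases hp with ⟨he', _⟩ | ⟨_, hle⟩
          · exact absurd he' ho
          · -- θ ≤ φ, φ = α j is bottom of arc j, so θ = φ
            have hθφ : θ = φ := le_antisymm hle (hφe ▸ hθ.1)
            rw [← hθφ]
            exact ⟨min_le_left _ _, le_max_left _ _⟩
        · -- Odd j2, φ ≤ ψ; φ = α (j2+1) top of arc j2 so ψ = φ
          have hψφ : ψ = φ := by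
            have hup : ψ ≤ Q.α (j2 + 1) := hψ.2
            have hb : φ = Q.α (j2 + 1) := by rw [← hj2]; exact hφe
            linarith [hb ▸ hup]
          rw [← hψφ]
          exact ⟨min_le_right _ _, le_max_right _ _⟩

lemma covRel_up (j : ℤ) (h : Q.m = 0 ∨ ¬ Even j) : Q.covRel (Q.α j) (Q.α (j + 1)) := by
  unfold covRel
  split_ifs with hm
  · exact Q.mono.monotone (by omega)
  · rcases h with h0 | hodd
    · exact absurd h0 hm
    · exact ⟨j, ⟨le_rfl, Q.mono.monotone (by omega)⟩,
        ⟨Q.mono.monotone (by omega), le_rfl⟩,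
        Or.inr ⟨hodd, Q.mono.monotone (by omega)⟩⟩

lemma covRel_down (j : ℤ) (hm : Q.m ≠ 0) (he : Even j) :
    Q.covRel (Q.α (j + 1)) (Q.α j) := by
  unfold covRel
  rw [if_neg hm]
  exact ⟨j, ⟨Q.mono.monotone (by omega), le_rfl⟩, ⟨le_rfl, Q.mono.monotone (by omega)⟩,
    Or.inl ⟨he, Q.mono.monotone (by omega)⟩⟩

variable (Q)

/-- The number of arcs used to travel once around the circle. -/
def periodN : ℕ := if Q.m = 0 then 2 else 2 * Q.m

lemma periodN_pos : 0 < Q.periodN := by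
  unfold periodN; split_ifs <;> omega

lemma α_periodN : Q.α (Q.periodN : ℤ) = Q.α 0 + 2 * Real.pi := by
  unfold periodN
  split_ifs with hm
  · have h2 : ((2:ℕ):ℤ) = 2 := by norm_cast
    rw [h2, Q.cyc hm 2, Q.cyc hm 0]
    push_cast; ring
  · have := Q.per hm 0
    rw [zero_add] at this
    rw [← this]
    norm_cast

end AtR
/-- A representation (i.e. an `S¹` persistence module) of the continuous quiver of
type Ã, presented equivariantly on the universal cover: vector spaces `obj θ`,
linear maps along every morphism of the quiver (encoded by `covRel`), and a
periodicity isomorphism `per` identifying `obj (θ + 2π)` with `obj θ`,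
compatibly with the maps. -/
structure SRep (k : Type) [Field k] (Q : AtR) where
  obj : ℝ → Type
  [instAdd : ∀ θ, AddCommGroup (obj θ)]
  [instMod : ∀ θ, Module k (obj θ)]
  map : ∀ {θ φ : ℝ}, Q.covRel θ φ → (obj θ →ₗ[k] obj φ)
  map_id : ∀ (θ : ℝ) (h : Q.covRel θ θ), map h = LinearMap.id
  map_comp : ∀ {θ φ ψ : ℝ} (h1 : Q.covRel θ φ) (h2 : Q.covRel φ ψ) (h3 : Q.covRel θ ψ),
      map h3 = (map h2).comp (map h1)
  per : ∀ θ : ℝ, obj (θ + 2 * Real.pi) ≃ₗ[k] obj θ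
  per_map : ∀ {θ φ : ℝ} (h : Q.covRel θ φ) (h' : Q.covRel (θ + 2 * Real.pi) (φ + 2 * Real.pi)),
      (map h).comp (per θ).toLinearMap = ((per φ).toLinearMap).comp (map h')

attribute [instance] SRep.instAdd SRep.instMod

namespace SRep

variable {k : Type} [Field k] {Q : AtR}

lemma per_map_apply (V : SRep k Q) {θ φ : ℝ} (h : Q.covRel θ φ)
    (h' : Q.covRel (θ + 2 * Real.pi) (φ + 2 * Real.pi)) (x : V.obj (θ + 2 * Real.pi)) :
    V.map h (V.per θ x) = V.per φ (V.map h' x) :=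
  LinearMap.congr_fun (V.per_map h h') x

/-- Transport along an equality of points of the cover. -/
def castO (V : SRep k Q) {a b : ℝ} (h : a = b) : V.obj a ≃ₗ[k] V.obj b :=
  h ▸ LinearEquiv.refl k (V.obj a)

/-- A family of linear maps is a morphism of representations if it is natural with
respect to all the structure maps and the periodicity isomorphisms. -/
def IsHomFam (V W : SRep k Q) (f : ∀ θ, V.obj θ →ₗ[k] W.obj θ) : Prop :=
  (∀ {θ φ : ℝ} (h : Q.covRel θ φ) (v : V.obj θ), f φ (V.map h v) = W.map h (f θ v)) ∧
  (∀ (θ : ℝ) (v : V.obj (θ + 2 * Real.pi)), f θ (V.per θ v) = W.per θ (f (θ + 2 * Real.pi) v))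

/-- Two representations are isomorphic if there is a family of linear isomorphisms
natural with respect to the structure maps and the periodicity isomorphisms. -/
def RepIso (V W : SRep k Q) : Prop :=
  ∃ e : ∀ θ, V.obj θ ≃ₗ[k] W.obj θ,
    (∀ {θ φ : ℝ} (h : Q.covRel θ φ) (v : V.obj θ), e φ (V.map h v) = W.map h (e θ v)) ∧
    (∀ (θ : ℝ) (v : V.obj (θ + 2 * Real.pi)), e θ (V.per θ v) = W.per θ (e (θ + 2 * Real.pi) v))

/-- `U` is a (direct) summand of `V`. -/
def SummandOf (U V : SRep k Q) : Prop :=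
  ∃ (f : ∀ θ, U.obj θ →ₗ[k] V.obj θ) (g : ∀ θ, V.obj θ →ₗ[k] U.obj θ),
    IsHomFam U V f ∧ IsHomFam V U g ∧ ∀ (θ : ℝ) (u : U.obj θ), g θ (f θ u) = u

/-- A representation is nonzero if some of its spaces is nonzero. -/
def Nonzero (V : SRep k Q) : Prop := ∃ (θ : ℝ) (v : V.obj θ), v ≠ 0

/-- Pointwise finite-dimensional. -/
def Pwf (V : SRep k Q) : Prop := ∀ θ, FiniteDimensional k (V.obj θ)

/-- Binary direct sum of representations. -/
def prod (V W : SRep k Q) : SRep k Q where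
  obj θ := V.obj θ × W.obj θ
  map h := (V.map h).prodMap (W.map h)
  map_id θ h := by
    rw [V.map_id θ h, W.map_id θ h]; exact LinearMap.prodMap_id
  map_comp h1 h2 h3 := by
    rw [V.map_comp h1 h2 h3, W.map_comp h1 h2 h3]
    exact (LinearMap.prodMap_comp _ _ _ _).symm
  per θ := (V.per θ).prodCongr (W.per θ)
  per_map h h' := by
    apply LinearMap.ext
    rintro ⟨a, b⟩
    simp only [LinearMap.comp_apply, LinearEquiv.coe_coe, LinearMap.prodMap_apply,
      LinearEquiv.prodCongr_apply]
    exact Prod.ext (V.per_map_apply h h' a) (W.per_map_apply h h' b)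

/-- Arbitrary direct sums of representations. -/
def dsum {B : Type} (A : B → SRep k Q) : SRep k Q where
  obj θ := Π₀ b, (A b).obj θ
  map h := DFinsupp.mapRange.linearMap fun b => (A b).map h
  map_id θ h := by
    have : (fun b => (A b).map h) = fun b => (LinearMap.id : (A b).obj θ →ₗ[k] _) := by
      funext b; exact (A b).map_id θ h
    rw [this]; exact DFinsupp.mapRange.linearMap_id
  map_comp h1 h2 h3 := by
    have : (fun b => (A b).map h3) = fun b => ((A b).map h2).comp ((A b).map h1) := by
      funext b; exact (A b).map_comp h1 h2 h3
    rw [this]; exact DFinsupp.mapRange.linearMap_comp _ _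
  per θ := DFinsupp.mapRange.linearEquiv fun b => (A b).per θ
  per_map h h' := by
    apply LinearMap.ext
    intro x
    ext b
    simp only [LinearMap.comp_apply, LinearEquiv.coe_coe,
      DFinsupp.mapRange.linearEquiv_apply, DFinsupp.mapRange.linearMap_apply,
      DFinsupp.mapRange_apply]
    exact (A b).per_map_apply h h' (x b)

/-- Indecomposability. -/
def Indecomposable (V : SRep k Q) : Prop :=
  V.Nonzero ∧ ∀ A B : SRep k Q, A.Nonzero → B.Nonzero → ¬ RepIso V (A.prod B)

end SRep
/-! ## Bars -/

/-- The basis of the bar `M_I` at the point `e^{iθ}`: the set `ξ⁻¹(e^{iθ}) ∩ I`. -/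
def barIdx (I : Set ℝ) (θ : ℝ) : Type :=
  {β : ℝ // β ∈ I ∧ ∃ n : ℤ, β = θ + 2 * Real.pi * n}

/-- The canonical identification of the bars' bases over `θ + 2π` and `θ`. -/
def barShift (I : Set ℝ) (θ : ℝ) : barIdx I (θ + 2 * Real.pi) ≃ barIdx I θ where
  toFun b := ⟨b.1, b.2.1, by
    obtain ⟨n, hn⟩ := b.2.2
    exact ⟨n + 1, by push_cast; linarith⟩⟩
  invFun b := ⟨b.1, b.2.1, by
    obtain ⟨n, hn⟩ := b.2.2
    exact ⟨n - 1, by push_cast; linarith⟩⟩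
  left_inv b := by apply Subtype.ext; rfl
  right_inv b := by apply Subtype.ext; rfl

variable (k : Type) [Field k]

/-- The structure map of the bar `M_I` along a morphism `θ → φ`:
a basis vector `b_β` is sent to `b_{β - θ + φ}` when `β - θ + φ ∈ I` and to `0`
otherwise. -/
def barMapHom (I : Set ℝ) (θ φ : ℝ) :
    (barIdx I θ →₀ k) →ₗ[k] (barIdx I φ →₀ k) := by
  classical
  exact Finsupp.linearCombination k (fun β : barIdx I θ =>
    if h : β.1 - θ + φ ∈ I then
      Finsupp.single (⟨β.1 - θ + φ, h, by
        obtain ⟨n, hn⟩ := β.2.2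
        exact ⟨n, by rw [hn]; ring⟩⟩ : barIdx I φ) (1 : k)
    else 0)

variable {k}

namespace SRep

variable {Q : AtR}

/-- `V` is (isomorphic to) the bar `M_I` on the bounded interval `I ⊂ ℝ`. -/
def BarOn (I : Set ℝ) (V : SRep k Q) : Prop :=
  I.Nonempty ∧ Bornology.IsBounded I ∧ I.OrdConnected ∧
  ∃ e : ∀ θ, V.obj θ ≃ₗ[k] (barIdx I θ →₀ k),
    (∀ {θ φ : ℝ} (h : Q.covRel θ φ) (v : V.obj θ),
        e φ (V.map h v) = barMapHom k I θ φ (e θ v)) ∧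
    (∀ (θ : ℝ) (v : V.obj (θ + 2 * Real.pi)),
        e θ (V.per θ v) = Finsupp.equivMapDomain (barShift I θ) (e (θ + 2 * Real.pi) v))

/-- `V` is a bar. -/
def IsBar (V : SRep k Q) : Prop := ∃ I : Set ℝ, BarOn I V

end SRep
/-! ## Jordan cells -/

namespace SRep

variable {k : Type} [Field k] {Q : AtR}

/-- One step of the monodromy: the isomorphism `V(α j) ≃ V(α (j+1))` obtained
from the structure map along the arc (or its inverse, depending on the
orientation of the arc). -/
def step (V : SRep k Q)
    (hiso : ∀ ⦃θ φ : ℝ⦄ (h : Q.covRel θ φ), Function.Bijective (V.map h)) (j : ℤ) :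
    V.obj (Q.α j) ≃ₗ[k] V.obj (Q.α (j + 1)) :=
  if h : Q.m = 0 ∨ ¬ Even j then
    LinearEquiv.ofBijective _ (hiso (AtR.covRel_up j h))
  else
    (LinearEquiv.ofBijective _ (hiso (AtR.covRel_down j
      (by push_neg at h; exact h.1) (by push_neg at h; exact h.2)))).symm

/-- The zig-zag isomorphism from `V(α 0)` to `V(α n)`. -/
def zig (V : SRep k Q)
    (hiso : ∀ ⦃θ φ : ℝ⦄ (h : Q.covRel θ φ), Function.Bijective (V.map h)) :
    (n : ℕ) → (V.obj (Q.α 0) ≃ₗ[k] V.obj (Q.α (n : ℤ)))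
  | 0 => V.castO (congrArg Q.α (by norm_num))
  | (n + 1) => ((V.zig hiso n).trans (V.step hiso (n : ℤ))).trans
      (V.castO (congrArg Q.α (by push_cast; ring)))

/-- The monodromy automorphism `V̂` of `V(α 0)`: travel once counterclockwise
around the circle (via `zig`) and come back via the periodicity isomorphism. -/
def monodromy (V : SRep k Q)
    (hiso : ∀ ⦃θ φ : ℝ⦄ (h : Q.covRel θ φ), Function.Bijective (V.map h)) :
    V.obj (Q.α 0) ≃ₗ[k] V.obj (Q.α 0) :=
  ((V.zig hiso Q.periodN).trans (V.castO Q.α_periodN)).trans (V.per (Q.α 0))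

/-- `V` is a Jordan cell: its spaces have a constant finite dimension `d ≥ 1`,
all its structure maps are isomorphisms, and `V(α 0)` admits no direct sum
decomposition into two nonzero subspaces invariant under the monodromy. -/
structure IsJordanCell (V : SRep k Q) : Prop where
  bij : ∀ ⦃θ φ : ℝ⦄ (h : Q.covRel θ φ), Function.Bijective (V.map h)
  dim : ∃ d : ℕ, 1 ≤ d ∧ ∀ θ, Module.finrank k (V.obj θ) = d
  indec : ∀ U W : Submodule k (V.obj (Q.α 0)), IsCompl U W →
      (∀ u ∈ U, V.monodromy bij u ∈ U) → (∀ w ∈ W, V.monodromy bij w ∈ W) →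
      U = ⊥ ∨ W = ⊥

end SRep
/-! ## Restriction -/

/-- The periodization of a subset of `ℝ`: the full preimage under `ξ` of its image
in the circle. -/
def periodize (s : Set ℝ) : Set ℝ := {θ | ∃ n : ℤ, θ + 2 * Real.pi * n ∈ s}

lemma periodize_shift (s : Set ℝ) (θ : ℝ) :
    θ ∈ periodize s ↔ θ + 2 * Real.pi ∈ periodize s := by
  constructor
  · rintro ⟨n, hn⟩
    refine ⟨n - 1, ?_⟩
    push_cast
    rw [show θ + 2 * Real.pi + 2 * Real.pi * ((n : ℝ) - 1) = θ + 2 * Real.pi * (n : ℝ) from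
      by ring]
    exact hn
  · rintro ⟨n, hn⟩
    refine ⟨n + 1, ?_⟩
    push_cast
    rw [show θ + 2 * Real.pi * ((n : ℝ) + 1) = θ + 2 * Real.pi + 2 * Real.pi * (n : ℝ) from
      by ring]
    exact hn

namespace SRep

open Classical

variable {k : Type} [Field k] {Q : AtR}

/-- The restriction `V|_A` of a representation to a (2π-periodic) subset `A ⊂ ℝ`
corresponding to a subset of the circle.  Its space at `θ ∈ A` is `V(θ)` and `0`
elsewhere; its structure map along a morphism `θ → φ` is `V(θ,φ)` when every
point through which the morphism factors lies in `A` (the set of such points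
being the interval `[min θ φ, max θ φ]`), and `0` otherwise. -/
def restrict (V : SRep k Q) (A : Set ℝ) (hA : ∀ θ, θ ∈ A ↔ θ + 2 * Real.pi ∈ A) :
    SRep k Q where
  obj θ := PLift (θ ∈ A) → V.obj θ
  map {θ φ} h :=
    { toFun := fun F _ =>
        if c : Set.Icc (min θ φ) (max θ φ) ⊆ A then
          V.map h (F ⟨c ⟨min_le_left θ φ, le_max_left θ φ⟩⟩) else 0
      map_add' := by
        intro F G; funext hφ
        by_cases c : Set.Icc (min θ φ) (max θ φ) ⊆ A <;> simp [c]
      map_smul' := by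
        intro a F; funext hφ
        by_cases c : Set.Icc (min θ φ) (max θ φ) ⊆ A <;> simp [c] }
  map_id θ h := by
    apply LinearMap.ext; intro F; funext hφ
    have c : Set.Icc (min θ θ) (max θ θ) ⊆ A := by
      rw [min_self, max_self, Set.Icc_self]
      exact Set.singleton_subset_iff.mpr hφ.down
    simp only [LinearMap.coe_mk, AddHom.coe_mk, LinearMap.id_coe, id_eq]
    rw [dif_pos c, V.map_id θ h]
    rfl
  map_comp {θ φ ψ} h1 h2 h3 := by
    apply LinearMap.ext; intro F; funext hψ
    have hkey := AtR.covRel_hull h1 h2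
    have s1 : Set.Icc (min θ φ) (max θ φ) ⊆ Set.Icc (min θ ψ) (max θ ψ) :=
      Set.Icc_subset_Icc (le_min (min_le_left θ ψ) hkey.1) (max_le (le_max_left θ ψ) hkey.2)
    have s2 : Set.Icc (min φ ψ) (max φ ψ) ⊆ Set.Icc (min θ ψ) (max θ ψ) :=
      Set.Icc_subset_Icc (le_min hkey.1 (min_le_right θ ψ)) (max_le hkey.2 (le_max_right θ ψ))
    by_cases c1 : Set.Icc (min θ φ) (max θ φ) ⊆ A
    · by_cases c2 : Set.Icc (min φ ψ) (max φ ψ) ⊆ A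
      · have c3 : Set.Icc (min θ ψ) (max θ ψ) ⊆ A := by
          intro z hz
          rcases le_total θ ψ with hθψ | hθψ
          · rw [min_eq_left hθψ, max_eq_right hθψ] at hz
            rcases le_total z φ with hzφ | hzφ
            · exact c1 ⟨le_trans (min_le_left θ φ) hz.1, le_trans hzφ (le_max_right θ φ)⟩
            · exact c2 ⟨le_trans (min_le_left φ ψ) hzφ, le_trans hz.2 (le_max_right φ ψ)⟩
          · rw [min_eq_right hθψ, max_eq_left hθψ] at hz
            rcases le_total z φ with hzφ | hzφ
            · exact c2 ⟨le_trans (min_le_right φ ψ) hz.1, le_trans hzφ (le_max_left φ ψ)⟩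
            · exact c1 ⟨le_trans (min_le_right θ φ) hzφ, le_trans hz.2 (le_max_left θ φ)⟩
        simp only [LinearMap.coe_mk, AddHom.coe_mk, LinearMap.comp_apply]
        rw [dif_pos c3, dif_pos c2, dif_pos c1, V.map_comp h1 h2 h3]
        rfl
      · have c3 : ¬ Set.Icc (min θ ψ) (max θ ψ) ⊆ A := fun c3 => c2 fun z hz => c3 (s2 hz)
        simp only [LinearMap.coe_mk, AddHom.coe_mk, LinearMap.comp_apply]
        rw [dif_neg c3, dif_neg c2]
    · have c3 : ¬ Set.Icc (min θ ψ) (max θ ψ) ⊆ A := fun c3 => c1 fun z hz => c3 (s1 hz)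
      simp only [LinearMap.coe_mk, AddHom.coe_mk, LinearMap.comp_apply]
      rw [dif_neg c3]
      by_cases c2 : Set.Icc (min φ ψ) (max φ ψ) ⊆ A
      · rw [dif_pos c2, dif_neg c1, map_zero]
      · rw [dif_neg c2]
  per θ :=
    { toFun := fun F hθ => V.per θ (F ⟨(hA θ).mp hθ.down⟩)
      map_add' := by intro F G; funext hθ; simp
      map_smul' := by intro a F; funext hθ; simp
      invFun := fun G h2 => (V.per θ).symm (G ⟨(hA θ).mpr h2.down⟩)
      left_inv := by intro F; funext h2; simp
      right_inv := by intro G; funext hθ; simp }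
  per_map {θ φ} h h' := by
    apply LinearMap.ext; intro F; funext hφ
    have e1 : min (θ + 2 * Real.pi) (φ + 2 * Real.pi) = min θ φ + 2 * Real.pi :=
      min_add_add_right θ φ _
    have e2 : max (θ + 2 * Real.pi) (φ + 2 * Real.pi) = max θ φ + 2 * Real.pi :=
      max_add_add_right θ φ _
    have hcc : (Set.Icc (min (θ + 2 * Real.pi) (φ + 2 * Real.pi))
        (max (θ + 2 * Real.pi) (φ + 2 * Real.pi)) ⊆ A) ↔
        (Set.Icc (min θ φ) (max θ φ) ⊆ A) := by
      rw [e1, e2]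
      constructor
      · intro c z hz
        rw [hA z]
        exact c ⟨by linarith [hz.1], by linarith [hz.2]⟩
      · intro c z hz
        have h2 : z - 2 * Real.pi ∈ Set.Icc (min θ φ) (max θ φ) :=
          ⟨by linarith [hz.1], by linarith [hz.2]⟩
        have h3 := (hA (z - 2 * Real.pi)).mp (c h2)
        simpa using h3
    simp only [LinearMap.coe_mk, AddHom.coe_mk, LinearMap.comp_apply, LinearEquiv.coe_coe,
      LinearEquiv.coe_mk]
    by_cases c : Set.Icc (min θ φ) (max θ φ) ⊆ A
    · rw [dif_pos c, dif_pos (hcc.mpr c)]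
      exact V.per_map_apply h h' _
    · rw [dif_neg c, dif_neg (fun cc => c (hcc.mp cc)), map_zero]

/-- `V` is finitistic: it is pointwise finite-dimensional and for each arc
`R̄_n = [α n, α (n+1)]`, every bar in the bar code decomposition of the
restriction `V|_{R̄_n}` has support touching an endpoint of the arc. -/
def Finitistic (V : SRep k Q) : Prop :=
  Pwf V ∧ ∀ n : ℤ, ∃ (B : Type) (Wb : B → SRep k Q) (I : B → Set ℝ),
    (∀ b, BarOn (I b) (Wb b) ∧ I b ⊆ Set.Icc (Q.α n) (Q.α (n + 1)) ∧
      (Q.α n ∈ I b ∨ Q.α (n + 1) ∈ I b)) ∧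
    RepIso (V.restrict (periodize (Set.Icc (Q.α n) (Q.α (n + 1))))
      (periodize_shift _)) (dsum Wb)

end SRep
/-! ## Representations of (finite) quivers of type Ã_n

An `Ã_n` quiver has `N = n + 1` vertices, indexed by `ZMod N`, arranged
counterclockwise in a cycle, with exactly one arrow between the vertices `i` and
`i + 1` for each `i : ZMod N`; the orientation function `o` records its direction
(`o i = true` iff the arrow goes `i → i + 1`). -/

/-- A representation of the `Ã_{N-1}` quiver with orientation `o`. -/
structure CycRep (k : Type) [Field k] (N : ℕ) (o : ZMod N → Bool) where
  M : ZMod N → Type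
  [instAdd : ∀ i, AddCommGroup (M i)]
  [instMod : ∀ i, Module k (M i)]
  up : ∀ i : ZMod N, o i = true → (M i →ₗ[k] M (i + 1))
  down : ∀ i : ZMod N, o i = false → (M (i + 1) →ₗ[k] M i)

attribute [instance] CycRep.instAdd CycRep.instMod

namespace CycRep

variable {k : Type} [Field k] {N : ℕ} {o : ZMod N → Bool}

/-- Transport along an equality of vertices. -/
def castM (A : CycRep k N o) {i i' : ZMod N} (h : i = i') : A.M i ≃ₗ[k] A.M i' :=
  h ▸ LinearEquiv.refl k (A.M i)

/-- Isomorphism of representations of the `Ã_{N-1}` quiver. -/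
def Iso (A B : CycRep k N o) : Prop :=
  ∃ e : ∀ i, A.M i ≃ₗ[k] B.M i,
    (∀ (i : ZMod N) (h : o i = true) (v : A.M i),
        e (i + 1) (A.up i h v) = B.up i h (e i v)) ∧
    (∀ (i : ZMod N) (h : o i = false) (v : A.M (i + 1)),
        e i (A.down i h v) = B.down i h (e (i + 1) v))

def Nonzero (A : CycRep k N o) : Prop := ∃ (i : ZMod N) (v : A.M i), v ≠ 0

/-- Binary direct sum. -/
def prod (A B : CycRep k N o) : CycRep k N o where
  M i := A.M i × B.M i
  up i h := (A.up i h).prodMap (B.up i h)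
  down i h := (A.down i h).prodMap (B.down i h)

/-- Arbitrary direct sum. -/
def dsum {B : Type} (A : B → CycRep k N o) : CycRep k N o where
  M i := Π₀ b, (A b).M i
  up i h := DFinsupp.mapRange.linearMap fun b => (A b).up i h
  down i h := DFinsupp.mapRange.linearMap fun b => (A b).down i h

def Indecomposable (A : CycRep k N o) : Prop :=
  A.Nonzero ∧ ∀ B C : CycRep k N o, B.Nonzero → C.Nonzero → ¬ Iso A (B.prod C)

end CycRep

/-- The basis of the bar on the interval `{a, ..., b} ⊂ ℤ` at the vertex `i`:
integers in the interval congruent to `i` mod `N`. -/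
def cycIdx (N : ℕ) (a b : ℤ) (i : ZMod N) : Type :=
  {m : ℤ // m ∈ Set.Icc a b ∧ ((m : ZMod N) = i)}

variable (k : Type) [Field k]

open Classical in
/-- The bar's map along an arrow `i → i + 1` : `b_m ↦ b_{m+1}` when `m+1` stays in
the interval, and `0` otherwise. -/
def cycBarUp (N : ℕ) (a b : ℤ) (i : ZMod N) :
    (cycIdx N a b i →₀ k) →ₗ[k] (cycIdx N a b (i + 1) →₀ k) :=
  Finsupp.linearCombination k (fun m : cycIdx N a b i =>
    if hm : m.1 + 1 ∈ Set.Icc a b then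
      Finsupp.single (⟨m.1 + 1, hm, by push_cast; rw [m.2.2]⟩ : cycIdx N a b (i + 1)) (1 : k)
    else 0)

open Classical in
/-- The bar's map along an arrow `i + 1 → i` : `b_m ↦ b_{m-1}` when `m-1` stays in
the interval, and `0` otherwise. -/
def cycBarDown (N : ℕ) (a b : ℤ) (i : ZMod N) :
    (cycIdx N a b (i + 1) →₀ k) →ₗ[k] (cycIdx N a b i →₀ k) :=
  Finsupp.linearCombination k (fun m : cycIdx N a b (i + 1) =>
    if hm : m.1 - 1 ∈ Set.Icc a b then
      Finsupp.single (⟨m.1 - 1, hm, by push_cast; rw [m.2.2]; ring⟩ : cycIdx N a b i) (1 : k)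
    else 0)

variable {k}

namespace CycRep

variable {k : Type} [Field k] {N : ℕ} {o : ZMod N → Bool}

/-- `A` is (isomorphic to) the bar on the interval `{a, ..., b}` of `ℤ`. -/
def BarOn (a b : ℤ) (A : CycRep k N o) : Prop :=
  a ≤ b ∧ ∃ e : ∀ i, A.M i ≃ₗ[k] (cycIdx N a b i →₀ k),
    (∀ (i : ZMod N) (h : o i = true) (v : A.M i),
        e (i + 1) (A.up i h v) = cycBarUp k N a b i (e i v)) ∧
    (∀ (i : ZMod N) (h : o i = false) (v : A.M (i + 1)),
        e i (A.down i h v) = cycBarDown k N a b i (e (i + 1) v))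

def IsBar (A : CycRep k N o) : Prop := ∃ a b : ℤ, BarOn a b A

/-- One step `M i ≃ M (i+1)` of the monodromy of a representation all of whose
arrow maps are isomorphisms. -/
def stepC (A : CycRep k N o)
    (hup : ∀ (i : ZMod N) (h : o i = true), Function.Bijective (A.up i h))
    (hdown : ∀ (i : ZMod N) (h : o i = false), Function.Bijective (A.down i h))
    (i : ZMod N) : A.M i ≃ₗ[k] A.M (i + 1) :=
  if h : o i = true then LinearEquiv.ofBijective _ (hup i h)
  else (LinearEquiv.ofBijective _ (hdown i (by revert h; cases o i <;> simp))).symm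

def zigC (A : CycRep k N o)
    (hup : ∀ (i : ZMod N) (h : o i = true), Function.Bijective (A.up i h))
    (hdown : ∀ (i : ZMod N) (h : o i = false), Function.Bijective (A.down i h)) :
    (n : ℕ) → (A.M 0 ≃ₗ[k] A.M (n : ZMod N))
  | 0 => A.castM (by norm_num)
  | (n + 1) => ((A.zigC hup hdown n).trans (A.stepC hup hdown (n : ZMod N))).trans
      (A.castM (by push_cast; ring))

/-- The monodromy `M̂ : M 0 ≃ M 0` obtained by composing the arrow maps and their
inverses once around the cycle. -/
def monodromyC (A : CycRep k N o)
    (hup : ∀ (i : ZMod N) (h : o i = true), Function.Bijective (A.up i h))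
    (hdown : ∀ (i : ZMod N) (h : o i = false), Function.Bijective (A.down i h)) :
    A.M 0 ≃ₗ[k] A.M 0 :=
  (A.zigC hup hdown N).trans (A.castM (by simp))

/-- `A` is a Jordan cell representation of the `Ã_{N-1}` quiver. -/
structure IsJordan (A : CycRep k N o) : Prop where
  bijUp : ∀ (i : ZMod N) (h : o i = true), Function.Bijective (A.up i h)
  bijDown : ∀ (i : ZMod N) (h : o i = false), Function.Bijective (A.down i h)
  dim : ∃ d : ℕ, 1 ≤ d ∧ ∀ i, Module.finrank k (A.M i) = d
  indec : ∀ U W : Submodule k (A.M 0), IsCompl U W →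
      (∀ u ∈ U, A.monodromyC bijUp bijDown u ∈ U) →
      (∀ w ∈ W, A.monodromyC bijUp bijDown w ∈ W) → U = ⊥ ∨ W = ⊥

end CycRep
/-! ## Partitions of the circle and push downs -/

/-- A finite partition of the circle into (at least two) path-connected parts,
presented on the universal cover: `2π`-periodically ordered intervals `J j`
(`j : ℤ`), with `J (j + N)` the translate of `J j`; the parts of the circle are
the images of the `J j`, and `j` reduces mod `N` to the index of the part. -/
structure CircPartition (Q : AtR) where
  N : ℕ
  hN : 2 ≤ N
  J : ℤ → Set ℝ
  nonempty : ∀ j, (J j).Nonempty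
  ordconn : ∀ j, (J j).OrdConnected
  ordered : ∀ {j j' : ℤ}, j < j' → ∀ x ∈ J j, ∀ y ∈ J j', x < y
  cover : ∀ θ : ℝ, ∃ j, θ ∈ J j
  jper : ∀ (j : ℤ) (θ : ℝ), θ ∈ J j ↔ θ + 2 * Real.pi ∈ J (j + N)

namespace CircPartition

variable {Q : AtR} (C : CircPartition Q)

/-- The index of the part containing `θ`. -/
def partIdx (θ : ℝ) : ℤ := Classical.choose (C.cover θ)

lemma mem_partIdx (θ : ℝ) : θ ∈ C.J (C.partIdx θ) := Classical.choose_spec (C.cover θ)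

lemma partIdx_eq {θ : ℝ} {j : ℤ} (h : θ ∈ C.J j) : C.partIdx θ = j := by
  by_contra hne
  rcases lt_or_gt_of_ne hne with hlt | hlt
  · exact lt_irrefl θ (C.ordered hlt _ (C.mem_partIdx θ) _ h)
  · exact lt_irrefl θ (C.ordered hlt _ h _ (C.mem_partIdx θ))

lemma partIdx_shift (θ : ℝ) : C.partIdx (θ + 2 * Real.pi) = C.partIdx θ + C.N :=
  C.partIdx_eq ((C.jper _ _).mp (C.mem_partIdx θ))

/-- The index of the part containing `θ`, as a vertex of the auxiliary quiver. -/
def partZ (θ : ℝ) : ZMod C.N := ((C.partIdx θ : ℤ) : ZMod C.N)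

lemma partZ_shift (θ : ℝ) : C.partZ (θ + 2 * Real.pi) = C.partZ θ := by
  unfold partZ
  rw [C.partIdx_shift θ]
  push_cast
  simp

lemma partZ_congr {θ φ : ℝ} (hp : C.partIdx θ = C.partIdx φ) : C.partZ θ = C.partZ φ := by
  unfold partZ; rw [hp]

lemma partZ_succ {θ φ : ℝ} (hp : C.partIdx φ = C.partIdx θ + 1) :
    C.partZ θ + 1 = C.partZ φ := by
  unfold partZ; rw [hp]; push_cast; ring

lemma partZ_pred {θ φ : ℝ} (hp : C.partIdx θ = C.partIdx φ + 1) :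
    C.partZ θ = C.partZ φ + 1 := by
  unfold partZ; rw [hp]; push_cast; ring

/-- There is an arrow from the part of `J j` to the part of `J (j+1)` in the
auxiliary quiver (their union being automatically path-connected). -/
def dirUp (j : ℤ) : Prop := ∃ x ∈ C.J j, ∃ y ∈ C.J (j + 1), Q.covRel x y

/-- There is an arrow from the part of `J (j+1)` to the part of `J j`. -/
def dirDown (j : ℤ) : Prop := ∃ x ∈ C.J (j + 1), ∃ y ∈ C.J j, Q.covRel x y

end CircPartition

namespace SRep

variable {k : Type} [Field k] {Q : AtR}

/-- `U` is the push down to the continuous quiver of the representation `A` of the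
auxiliary `Ã_{N-1}` quiver of the partition `C` (with orientation `o`):
`U` is constant equal to `A.M i` on the `i`-th part, with identity maps within a
part, the maps of `A` across boundaries of parts, and the evident periodicity. -/
def PushdownOf (C : CircPartition Q) (o : ZMod C.N → Bool) (A : CycRep k C.N o)
    (U : SRep k Q) : Prop :=
  ∃ e : ∀ θ, U.obj θ ≃ₗ[k] A.M (C.partZ θ),
    (∀ {θ φ : ℝ} (h : Q.covRel θ φ) (hp : C.partIdx θ = C.partIdx φ) (v : U.obj θ),
        e φ (U.map h v) = A.castM (C.partZ_congr hp) (e θ v)) ∧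
    (∀ {θ φ : ℝ} (h : Q.covRel θ φ) (hp : C.partIdx φ = C.partIdx θ + 1)
        (ht : o (C.partZ θ) = true) (v : U.obj θ),
        e φ (U.map h v) = A.castM (C.partZ_succ hp) (A.up (C.partZ θ) ht (e θ v))) ∧
    (∀ {θ φ : ℝ} (h : Q.covRel θ φ) (hp : C.partIdx θ = C.partIdx φ + 1)
        (hf : o (C.partZ φ) = false) (v : U.obj θ),
        e φ (U.map h v) = A.down (C.partZ φ) hf (A.castM (C.partZ_pred hp) (e θ v))) ∧
    (∀ (θ : ℝ) (v : U.obj (θ + 2 * Real.pi)),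
        e θ (U.per θ v) = A.castM (C.partZ_shift θ) (e (θ + 2 * Real.pi) v))

/-- Transport between the values of `V` at representative points whose indices
agree modulo the period, using the periodicity isomorphism if needed. -/
def ptBridge (V : SRep k Q) (pt : ℤ → ℝ) (Nn : ℕ)
    (hper : ∀ j : ℤ, pt (j + (Nn : ℤ)) = pt j + 2 * Real.pi) {a b : ℤ}
    (h : a = b ∨ a = b + (Nn : ℤ)) : V.obj (pt a) ≃ₗ[k] V.obj (pt b) :=
  if he : a = b then V.castO (congrArg pt he)
  else (V.castO (show pt a = pt b + 2 * Real.pi by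
      rw [h.resolve_left he]; exact hper b)).trans (V.per (pt b))

lemma zmod_val_succ {N : ℕ} (hN : 2 ≤ N) (i : ZMod N) :
    (((i + 1 : ZMod N).val : ℤ) = (i.val : ℤ) + 1) ∨
      ((i.val : ℤ) + 1 = ((i + 1 : ZMod N).val : ℤ) + (N : ℤ)) := by
  haveI : NeZero N := ⟨by omega⟩
  haveI : Fact (1 < N) := ⟨by omega⟩
  have hval : (i + 1 : ZMod N).val = (i.val + 1) % N := by
    rw [ZMod.val_add, ZMod.val_one]
  have hlt : i.val < N := ZMod.val_lt i
  rcases Nat.lt_or_ge (i.val + 1) N with h | h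
  · left; rw [hval, Nat.mod_eq_of_lt h]; push_cast; ring
  · right
    have he : i.val + 1 = N := by omega
    rw [hval, he, Nat.mod_self]
    push_cast
    omega

/-- The auxiliary representation `M_V` of the auxiliary quiver of a partition `C`,
given by the values of `V` at the representative points `pt`. -/
def auxOfPoints (V : SRep k Q) (C : CircPartition Q) (o : ZMod C.N → Bool) (pt : ℤ → ℝ)
    (hper : ∀ j : ℤ, pt (j + (C.N : ℤ)) = pt j + 2 * Real.pi)
    (hup : ∀ (i : ZMod C.N), o i = true → Q.covRel (pt (i.val : ℤ)) (pt ((i.val : ℤ) + 1)))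
    (hdown : ∀ (i : ZMod C.N), o i = false → Q.covRel (pt ((i.val : ℤ) + 1)) (pt (i.val : ℤ))) :
    CycRep k C.N o where
  M i := V.obj (pt (i.val : ℤ))
  up i h := (V.ptBridge pt C.N hper
      ((zmod_val_succ C.hN i).imp Eq.symm id)).toLinearMap ∘ₗ V.map (hup i h)
  down i h := V.map (hdown i h) ∘ₗ (V.ptBridge pt C.N hper
      ((zmod_val_succ C.hN i).imp Eq.symm id)).symm.toLinearMap

/-- `U` is the refinement of `V` with respect to the partition `C` and the choice
of representative points `pt`: `U(θ) = V(pt (partIdx θ))`, with structure maps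
induced by those of `V` between representative points. -/
def RefinementOf (V : SRep k Q) (C : CircPartition Q) (pt : ℤ → ℝ)
    (hper : ∀ j : ℤ, pt (j + (C.N : ℤ)) = pt j + 2 * Real.pi) (U : SRep k Q) : Prop :=
  (∀ j, pt j ∈ C.J j) ∧
  ∃ e : ∀ θ, U.obj θ ≃ₗ[k] V.obj (pt (C.partIdx θ)),
    (∀ {θ φ : ℝ} (h : Q.covRel θ φ) (hp : C.partIdx θ = C.partIdx φ) (v : U.obj θ),
        e φ (U.map h v) = V.castO (congrArg pt hp) (e θ v)) ∧
    (∀ {θ φ : ℝ} (h : Q.covRel θ φ)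
        (hc : Q.covRel (pt (C.partIdx θ)) (pt (C.partIdx φ))) (v : U.obj θ),
        e φ (U.map h v) = V.map hc (e θ v)) ∧
    (∀ (θ : ℝ) (v : U.obj (θ + 2 * Real.pi)),
        e θ (U.per θ v) = V.per (pt (C.partIdx θ))
          ((V.castO (show pt (C.partIdx (θ + 2 * Real.pi)) = pt (C.partIdx θ) + 2 * Real.pi by
            rw [C.partIdx_shift θ]; exact hper _)) (e (θ + 2 * Real.pi) v)))

end SRep
/-! ## The endomorphism ring -/

namespace SRep

variable {k : Type} [Field k] {Q : AtR}

/-- The endomorphism ring of a representation: the subring of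
`∀ θ, End (V θ)` consisting of the natural families (with multiplication given by
pointwise composition). -/
def endSubring (V : SRep k Q) : Subring (∀ θ, Module.End k (V.obj θ)) where
  carrier := {f | IsHomFam V V f}
  mul_mem' := by
    rintro a b ⟨ha1, ha2⟩ ⟨hb1, hb2⟩
    constructor
    · intro θ φ h v
      simp only [Pi.mul_apply, Module.End.mul_apply]
      rw [hb1 h v, ha1 h]
    · intro θ v
      simp only [Pi.mul_apply, Module.End.mul_apply]
      rw [hb2 θ v, ha2 θ]
  one_mem' := by
    constructor
    · intro θ φ h v; simp
    · intro θ v; simp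
  add_mem' := by
    rintro a b ⟨ha1, ha2⟩ ⟨hb1, hb2⟩
    constructor
    · intro θ φ h v
      simp only [Pi.add_apply, LinearMap.add_apply]
      rw [ha1 h v, hb1 h v, map_add]
    · intro θ v
      simp only [Pi.add_apply, LinearMap.add_apply]
      rw [ha2 θ v, hb2 θ v, map_add]
  zero_mem' := by
    constructor
    · intro θ φ h v; simp
    · intro θ v; simp
  neg_mem' := by
    rintro a ⟨ha1, ha2⟩
    constructor
    · intro θ φ h v
      simp only [Pi.neg_apply, LinearMap.neg_apply]
      rw [ha1 h v, map_neg]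
    · intro θ v
      simp only [Pi.neg_apply, LinearMap.neg_apply]
      rw [ha2 θ v, map_neg]

end SRep

/-!
On each arc `[α n, α (n + 1)]` the restriction of a finitistic `V` is a sum of bars, each
containing an endpoint of the arc; as `V` is pointwise finite-dimensional there are finitely
many of them. The structure map of `V` between two points of an arc is an isomorphism as soon as
no end of a bar lies between them, since both points then lie in the same bars. Cutting the
circle at the `α n` and at the ends of the bars over one turn therefore leaves finitely many cut
points, and within each cut point and each open interval between consecutive cut points all
structure maps of `V` are isomorphisms. Composing with the structure maps from the chosen point
of each part, or their inverses, identifies the refinement with `V`.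
-/

open Real

section PeriodicSequence

variable {c : ℤ → ℝ} {K : ℤ} {p : ℝ}

lemma apply_add_mul_of_apply_add (hc : ∀ i, c (i + K) = c i + p) (i t : ℤ) :
    c (i + K * t) = c i + p * t := by
  simpa [mul_comm] using AddConstMapClass.map_add_zsmul (⟨c, hc⟩ : AddConstMap ℤ ℝ K p) i t

lemma Monotone.exists_apply_le_lt_apply_add_one (hc : Monotone c) {x : ℝ}
    (hlo : ∃ i, c i ≤ x) (hhi : ∃ j, x < c j) : ∃ i, c i ≤ x ∧ x < c (i + 1) := by
  obtain ⟨j, hj⟩ := hhi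
  have hbdd : ∃ b, ∀ i, c i ≤ x → i ≤ b :=
    ⟨j, fun i hi => le_of_not_gt fun hji => (hj.trans_le ((hc hji.le).trans hi)).false⟩
  obtain ⟨i, hi, hmax⟩ := Int.exists_greatest_of_bdd hbdd hlo
  exact ⟨i, hi, lt_of_not_ge fun h => (hmax (i + 1) h).not_gt (lt_add_one i)⟩

lemma exists_apply_le_lt_apply_add_one_of_apply_add (hc : Monotone c) (hp : 0 < p)
    (hper : ∀ i, c (i + K) = c i + p) (x : ℝ) : ∃ i, c i ≤ x ∧ x < c (i + 1) := by
  have hc0 : ∀ t, c (K * t) = c 0 + p * t := fun t => by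
    simpa using apply_add_mul_of_apply_add hper 0 t
  refine hc.exists_apply_le_lt_apply_add_one ⟨K * ⌊(x - c 0) / p⌋, ?_⟩
    ⟨K * (⌊(x - c 0) / p⌋ + 1), ?_⟩
  · have := Int.floor_le ((x - c 0) / p)
    rw [le_div_iff₀ hp] at this
    rw [hc0]
    linarith
  · have := Int.lt_floor_add_one ((x - c 0) / p)
    rw [div_lt_iff₀ hp] at this
    rw [hc0]
    push_cast
    linarith

end PeriodicSequence

lemma StrictMono.add_mul_lt_add_mul {K : ℕ} {f : Fin K → ℝ} (hf : StrictMono f) {a p : ℝ}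
    (hfa : ∀ r, f r ∈ Ico a (a + p)) {q q' : ℤ} {r r' : Fin K}
    (h : q * K + r < q' * K + r') : f r + p * q < f r' + p * q' := by
  have hr : ((r : ℕ) : ℤ) < K := by exact_mod_cast r.is_lt
  have hr' : ((r' : ℕ) : ℤ) < K := by exact_mod_cast r'.is_lt
  rcases lt_trichotomy q q' with hq | rfl | hq
  · have hp : 0 < p := by linarith [(hfa r).1, (hfa r).2]
    have : (q : ℝ) + 1 ≤ q' := by exact_mod_cast hq
    nlinarith [(hfa r).2, (hfa r').1, mul_le_mul_of_nonneg_left this hp.le]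
  · have : r < r' := by
      rw [Fin.lt_def, ← Int.ofNat_lt]
      linarith
    linarith [hf this]
  · have : (q' + 1) * (K : ℤ) ≤ q * K :=
      Int.mul_le_mul_of_nonneg_right (by omega) (Int.natCast_nonneg _)
    linarith [Int.natCast_nonneg (r : ℕ)]

lemma add_mul_mem_periodize {F : Set ℝ} {x : ℝ} (hx : x ∈ F) (t : ℤ) :
    x + 2 * π * t ∈ periodize F :=
  ⟨-t, by push_cast; ring_nf; exact hx⟩

/-- `c` lists the representatives in `[0, 2π)` of the points of `F` in increasing order, then their
translates by `2πℤ`. -/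
theorem exists_strictMono_periodize_subset_range {F : Set ℝ} (hF : F.Finite) (hne : F.Nonempty) :
    ∃ K : ℕ, 0 < K ∧ ∃ c : ℤ → ℝ, StrictMono c ∧ (∀ i, c (i + K) = c i + 2 * π) ∧
      periodize F ⊆ range c := by
  classical
  set G : Finset ℝ := hF.toFinset.image (toIcoMod two_pi_pos 0)
  have hK : 0 < G.card := Finset.card_pos.2 (by simpa [G] using hne)
  have : NeZero G.card := ⟨hK.ne'⟩
  set f := G.orderEmbOfFin rfl
  have hf : ∀ r, f r ∈ Ico 0 (0 + 2 * π) := fun r => by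
    obtain ⟨y, -, hy⟩ := Finset.mem_image.1 (G.orderEmbOfFin_mem rfl r)
    rw [← hy]
    simpa using toIcoMod_mem_Ico two_pi_pos 0 y
  set e := Int.divModEquiv G.card
  set c : ℤ → ℝ := fun i => f (e i).2 + 2 * π * (e i).1
  have hc : ∀ (q : ℤ) (r : Fin G.card), c (q * G.card + r) = f r + 2 * π * q := fun q r => by
    simp only [c]
    rw [show q * (G.card : ℤ) + r = e.symm (q, r) from rfl, e.apply_symm_apply]
  have hdecomp : ∀ i, i = (e i).1 * G.card + (e i).2 := fun i => (e.symm_apply_apply i).symm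
  refine ⟨G.card, hK, c, fun i j hij => ?_, fun i => ?_, fun x ⟨n, hn⟩ => ?_⟩
  · rw [hdecomp i, hdecomp j] at hij
    rw [hdecomp i, hdecomp j, hc, hc]
    exact f.strictMono.add_mul_lt_add_mul hf hij
  · rw [hdecomp i, show (e i).1 * (G.card : ℤ) + (e i).2 + G.card
        = ((e i).1 + 1) * G.card + (e i).2 by ring, hc, hc]
    push_cast
    ring
  · obtain ⟨r, hr⟩ : toIcoMod two_pi_pos 0 (x + 2 * π * n) ∈ range f := by
      rw [Finset.range_orderEmbOfFin]
      exact Finset.mem_image_of_mem _ (hF.mem_toFinset.2 hn)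
    have h := toIcoMod_add_toIcoDiv_zsmul two_pi_pos 0 (x + 2 * π * n)
    rw [← hr, zsmul_eq_mul] at h
    refine ⟨(toIcoDiv two_pi_pos 0 (x + 2 * π * n) - n) * G.card + r, ?_⟩
    rw [hc]
    push_cast
    linarith

namespace AtR

variable {Q : AtR}

lemma α_add_periodN (j : ℤ) : Q.α (j + Q.periodN) = Q.α j + 2 * π := by
  unfold periodN
  split_ifs with hm
  · rw [Q.cyc hm, Q.cyc hm]
    push_cast
    ring
  · exact_mod_cast Q.per hm j

lemma α_add_periodN_mul (j t : ℤ) : Q.α (j + Q.periodN * t) = Q.α j + 2 * π * t :=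
  apply_add_mul_of_apply_add α_add_periodN j t

lemma α_eq_α_emod_add (j : ℤ) :
    Q.α j = Q.α (j % Q.periodN) + 2 * π * (j / Q.periodN : ℤ) := by
  rw [← α_add_periodN_mul, Int.emod_add_mul_ediv]

lemma sub_mem_arc_emod {j : ℤ} {θ : ℝ} (hθ : θ ∈ Icc (Q.α j) (Q.α (j + 1))) :
    θ - 2 * π * (j / Q.periodN : ℤ) ∈ Icc (Q.α (j % Q.periodN)) (Q.α (j % Q.periodN + 1)) := by
  have e₁ := α_eq_α_emod_add (Q := Q) j
  have e₂ : Q.α (j + 1) = Q.α (j % Q.periodN + 1) + 2 * π * (j / Q.periodN : ℤ) := by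
    rw [← α_add_periodN_mul, add_right_comm, Int.emod_add_mul_ediv]
  exact ⟨by linarith [hθ.1], by linarith [hθ.2]⟩

lemma α_add_one_lt (j : ℤ) : Q.α (j + 1) < Q.α j + 2 * π := by
  have : 2 ≤ Q.periodN := by unfold periodN; split_ifs <;> omega
  rw [← α_add_periodN]
  exact Q.mono (by omega)

lemma exists_α_le_lt (θ : ℝ) : ∃ j, Q.α j ≤ θ ∧ θ < Q.α (j + 1) :=
  exists_apply_le_lt_apply_add_one_of_apply_add Q.mono.monotone two_pi_pos α_add_periodN θ

lemma exists_mem_arc (θ : ℝ) : ∃ j, θ ∈ Icc (Q.α j) (Q.α (j + 1)) :=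
  (exists_α_le_lt θ).imp fun _ h => ⟨h.1, h.2.le⟩

lemma eq_of_mem_arc_of_eq_add_mul {j : ℤ} {x y : ℝ} (hx : x ∈ Icc (Q.α j) (Q.α (j + 1)))
    (hy : y ∈ Icc (Q.α j) (Q.α (j + 1))) {t : ℤ} (h : x = y + 2 * π * t) : x = y := by
  have hlen := α_add_one_lt (Q := Q) j
  have h1 : (t : ℝ) < 1 := by nlinarith [hx.2, hy.1, two_pi_pos]
  have h2 : (-1 : ℝ) < t := by nlinarith [hx.1, hy.2, two_pi_pos]
  obtain rfl : t = 0 := by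
    have : t < 1 := by exact_mod_cast h1
    have : -1 < t := by exact_mod_cast h2
    omega
  simpa using h

lemma exists_mem_arc_of_disjoint {θ φ : ℝ} (h : Disjoint (range Q.α) (uIcc θ φ)) :
    ∃ j, θ ∈ Icc (Q.α j) (Q.α (j + 1)) ∧ φ ∈ Icc (Q.α j) (Q.α (j + 1)) := by
  obtain ⟨j, hθ₁, hθ₂⟩ := exists_α_le_lt (Q := Q) θ
  have hout : ∀ i, Q.α i ∉ uIcc θ φ := fun i hi => disjoint_left.1 h ⟨i, rfl⟩ hi
  refine ⟨j, ⟨hθ₁, hθ₂.le⟩, ?_, ?_⟩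
  · by_contra hφ
    exact hout j (mem_uIcc.2 (Or.inr ⟨(lt_of_not_ge hφ).le, hθ₁⟩))
  · by_contra hφ
    exact hout (j + 1) (mem_uIcc.2 (Or.inl ⟨hθ₂.le, (lt_of_not_ge hφ).le⟩))

lemma covRel_refl (θ : ℝ) : Q.covRel θ θ := by
  obtain ⟨j, hj⟩ := exists_mem_arc (Q := Q) θ
  unfold covRel
  split_ifs
  · exact le_rfl
  · exact ⟨j, hj, hj, (em (Even j)).imp (⟨·, le_rfl⟩) (⟨·, le_rfl⟩)⟩

lemma covRel_trans {θ φ ψ : ℝ} (h₁ : Q.covRel θ φ) (h₂ : Q.covRel φ ψ) : Q.covRel θ ψ := by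
  unfold covRel at *
  split_ifs at * with hm
  · exact h₁.trans h₂
  obtain ⟨j, hθ, hφ, hd⟩ := id h₁
  obtain ⟨j', hφ', hψ, hd'⟩ := id h₂
  rcases eq_or_ne j j' with rfl | hne
  · refine ⟨j, hθ, hψ, ?_⟩
    rcases hd with ⟨he, h1⟩ | ⟨ho, h1⟩ <;> rcases hd' with ⟨he', h2⟩ | ⟨ho', h2⟩
    exacts [Or.inl ⟨he, h2.trans h1⟩, absurd he ho', absurd he' ho, Or.inr ⟨ho, h1.trans h2⟩]
  -- the common endpoint `φ` of two consecutive arcs is a sink or a source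
  suffices θ = φ ∨ ψ = φ by
    rcases this with rfl | rfl
    exacts [h₂, h₁]
  rcases arcs_overlap hφ hφ' hne with ⟨rfl, hφe⟩ | ⟨rfl, hφe⟩
  · rcases hd with ⟨-, h1⟩ | ⟨ho, -⟩
    · exact Or.inl (by linarith [hθ.2])
    · rcases hd' with ⟨-, h2⟩ | ⟨ho', -⟩
      · exact Or.inr (by linarith [hψ.1])
      · exact absurd (Int.even_add_one.2 ho) ho'
  · rcases hd' with ⟨he', -⟩ | ⟨-, h2⟩
    · rcases hd with ⟨he, -⟩ | ⟨-, h1⟩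
      · exact absurd he (Int.even_add_one.not.2 (not_not.2 he'))
      · exact Or.inl (by linarith [hθ.1])
    · exact Or.inr (by linarith [hψ.2])

lemma covRel_or_covRel {j : ℤ} {θ φ : ℝ} (hθ : θ ∈ Icc (Q.α j) (Q.α (j + 1)))
    (hφ : φ ∈ Icc (Q.α j) (Q.α (j + 1))) : Q.covRel θ φ ∨ Q.covRel φ θ := by
  unfold covRel
  split_ifs
  · exact le_total θ φ
  by_cases he : Even j <;> rcases le_total θ φ with h | h
  exacts [Or.inr ⟨j, hφ, hθ, Or.inl ⟨he, h⟩⟩, Or.inl ⟨j, hθ, hφ, Or.inl ⟨he, h⟩⟩,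
    Or.inl ⟨j, hθ, hφ, Or.inr ⟨he, h⟩⟩, Or.inr ⟨j, hφ, hθ, Or.inr ⟨he, h⟩⟩]

lemma covRel_apply_of_monotone {f : ℝ → ℝ} (hf : Monotone f)
    (harc : ∀ j θ, θ ∈ Icc (Q.α j) (Q.α (j + 1)) → f θ ∈ Icc (Q.α j) (Q.α (j + 1)))
    {θ φ : ℝ} (h : Q.covRel θ φ) : Q.covRel (f θ) (f φ) := by
  unfold covRel at *
  split_ifs at *
  · exact hf h
  obtain ⟨j, hθ, hφ, hd⟩ := h
  exact ⟨j, harc j θ hθ, harc j φ hφ, hd.imp (And.imp_right (hf ·)) (And.imp_right (hf ·))⟩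

lemma covRel_add_mul {θ φ : ℝ} (h : Q.covRel θ φ) (t : ℤ) :
    Q.covRel (θ + 2 * π * t) (φ + 2 * π * t) := by
  unfold covRel at *
  split_ifs at * with hm
  · linarith
  obtain ⟨j, hθ, hφ, hd⟩ := h
  have hα := apply_add_mul_of_apply_add (Q.per hm)
  have harc : ∀ x ∈ Icc (Q.α j) (Q.α (j + 1)),
      x + 2 * π * t ∈ Icc (Q.α (j + 2 * Q.m * t)) (Q.α (j + 2 * Q.m * t + 1)) := by
    intro x hx
    rw [add_right_comm, hα, hα]
    exact ⟨by linarith [hx.1], by linarith [hx.2]⟩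
  have hpar : Even (j + 2 * Q.m * t) ↔ Even j := by
    simp [Int.even_add, mul_assoc]
  refine ⟨_, harc θ hθ, harc φ hφ, ?_⟩
  rw [hpar]
  rcases hd with ⟨he, h⟩ | ⟨ho, h⟩
  exacts [Or.inl ⟨he, by linarith⟩, Or.inr ⟨ho, by linarith⟩]

lemma covRel_add_two_pi {θ φ : ℝ} :
    Q.covRel (θ + 2 * π) (φ + 2 * π) ↔ Q.covRel θ φ :=
  ⟨fun h => by simpa using covRel_add_mul h (-1), fun h => by simpa using covRel_add_mul h 1⟩

end AtR

lemma Function.bijective_iff_of_comm {α β γ δ : Type*} {f : α → β} {g : γ → δ} (e₁ : α ≃ γ)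
    (e₂ : β ≃ δ) (h : ∀ x, e₂ (f x) = g (e₁ x)) : Function.Bijective f ↔ Function.Bijective g := by
  rw [← e₂.comp_bijective, show e₂ ∘ f = g ∘ e₁ from funext h, e₁.bijective_comp]

lemma Set.OrdConnected.mem_iff_mem_of_notMem_uIcc {α : Type*} [ConditionallyCompleteLinearOrder α]
    {I : Set α} (hI : I.OrdConnected) (hlo : BddBelow I) (hhi : BddAbove I) {x y : α}
    (hinf : sInf I ∉ uIcc x y) (hsup : sSup I ∉ uIcc x y) : x ∈ I ↔ y ∈ I := by
  wlog hxy : x ≤ y generalizing x y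
  · rw [uIcc_comm] at hinf hsup
    exact (this hinf hsup (le_of_not_ge hxy)).symm
  rw [uIcc_of_le hxy] at hinf hsup
  constructor
  · refine fun hx => by_contra fun hy => hsup ⟨le_csSup hhi hx, csSup_le ⟨x, hx⟩ fun z hz => ?_⟩
    exact le_of_not_gt fun hyz => hy (hI.out hx hz ⟨hxy, hyz.le⟩)
  · refine fun hy => by_contra fun hx => hinf ⟨le_csInf ⟨y, hy⟩ fun z hz => ?_, csInf_le hlo hy⟩
    exact le_of_not_gt fun hzx => hx (hI.out hz hy ⟨hzx.le, hxy⟩)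

namespace SRep

variable {k : Type} [Field k] {Q : AtR} (V : SRep k Q)

lemma map_map {θ φ ψ : ℝ} (h₁ : Q.covRel θ φ) (h₂ : Q.covRel φ ψ) (v : V.obj θ) :
    V.map h₂ (V.map h₁ v) = V.map (AtR.covRel_trans h₁ h₂) v := by
  rw [V.map_comp h₁ h₂]
  rfl

lemma map_self {θ : ℝ} (h : Q.covRel θ θ) (v : V.obj θ) : V.map h v = v := by
  rw [V.map_id]
  rfl

lemma map_eq_castO {a b : ℝ} (e : a = b) (h : Q.covRel a b) (v : V.obj a) :
    V.map h v = V.castO e v := by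
  subst e
  exact V.map_self h v

lemma map_castO {a b a' b' : ℝ} (ea : a = a') (eb : b = b') (h : Q.covRel a b)
    (h' : Q.covRel a' b') (v : V.obj a) : V.map h' (V.castO ea v) = V.castO eb (V.map h v) := by
  subst ea eb
  rfl

lemma bijective_map_of_bijective_restrict {A : Set ℝ} (hA : ∀ θ, θ ∈ A ↔ θ + 2 * π ∈ A)
    {θ φ : ℝ} (h : Q.covRel θ φ) (hsub : uIcc θ φ ⊆ A)
    (hr : Function.Bijective ((V.restrict A hA).map h)) : Function.Bijective (V.map h) := by
  have : Unique (PLift (θ ∈ A)) := ⟨⟨⟨hsub left_mem_uIcc⟩⟩, fun _ => rfl⟩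
  have : Unique (PLift (φ ∈ A)) := ⟨⟨⟨hsub right_mem_uIcc⟩⟩, fun _ => rfl⟩
  refine (Function.bijective_iff_of_comm (LinearEquiv.funUnique _ k _).toEquiv
    (LinearEquiv.funUnique _ k _).toEquiv fun F => ?_).1 hr
  exact dif_pos hsub

lemma bijective_dsum_map {B : Type} {A : B → SRep k Q} {θ φ : ℝ} (h : Q.covRel θ φ)
    (hA : ∀ b, Function.Bijective ((A b).map h)) : Function.Bijective ((dsum A).map h) :=
  (DFinsupp.mapRange.linearEquiv fun b => LinearEquiv.ofBijective _ (hA b)).bijective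

end SRep

section Bars

variable {k : Type} [Field k] {Q : AtR}

lemma barIdx_val_eq {n t : ℤ} {I : Set ℝ} (hI : I ⊆ Icc (Q.α n) (Q.α (n + 1))) {θ : ℝ}
    (hθ : θ - 2 * π * t ∈ Icc (Q.α n) (Q.α (n + 1))) (β : barIdx I θ) : β.1 = θ - 2 * π * t := by
  obtain ⟨hβ, s, hs⟩ := β.2
  exact AtR.eq_of_mem_arc_of_eq_add_mul (hI hβ) hθ (t := s + t) (by rw [hs]; push_cast; ring)

lemma barMapHom_barMapHom {I : Set ℝ} {θ φ : ℝ} (hI : ∀ β : barIdx I θ, β.1 - θ + φ ∈ I)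
    (x : barIdx I θ →₀ k) : barMapHom k I φ θ (barMapHom k I θ φ x) = x := by
  classical
  induction x using Finsupp.induction_linear with
  | zero => simp
  | add f g hf hg => rw [map_add, map_add, hf, hg]
  | single β c =>
    have hback : β.1 - θ + φ - φ + θ ∈ I := by simpa using β.2.1
    unfold barMapHom
    rw [Finsupp.linearCombination_single, dif_pos (hI β), map_smul]
    erw [Finsupp.linearCombination_single]
    rw [dif_pos hback, one_smul]
    erw [Finsupp.smul_single, smul_eq_mul, mul_one]
    congr 1
    exact Subtype.ext (by simp)

lemma bijective_barMapHom {I : Set ℝ} {θ φ : ℝ} (h₁ : ∀ β : barIdx I θ, β.1 - θ + φ ∈ I)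
    (h₂ : ∀ β : barIdx I φ, β.1 - φ + θ ∈ I) : Function.Bijective (barMapHom k I θ φ) :=
  ⟨Function.LeftInverse.injective (barMapHom_barMapHom h₁),
    Function.RightInverse.surjective (barMapHom_barMapHom h₂)⟩

end Bars

namespace SRep

variable {k : Type} [Field k] {Q : AtR} (V : SRep k Q)

/-- The bars of the arc `n` describe `V` on all its translates by `2πℤ`, since `V` is restricted
to the periodization of the arc. -/
lemma bijective_map_of_bars {n : ℤ} {B : Type} {Wb : B → SRep k Q} {I : B → Set ℝ}
    (hbar : ∀ b, BarOn (I b) (Wb b)) (hI : ∀ b, I b ⊆ Icc (Q.α n) (Q.α (n + 1)))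
    (hiso : RepIso (V.restrict (periodize (Icc (Q.α n) (Q.α (n + 1)))) (periodize_shift _))
      (dsum Wb))
    (t : ℤ) {θ φ : ℝ} (hθ : θ - 2 * π * t ∈ Icc (Q.α n) (Q.α (n + 1)))
    (hφ : φ - 2 * π * t ∈ Icc (Q.α n) (Q.α (n + 1)))
    (hmem : ∀ b, θ - 2 * π * t ∈ I b ↔ φ - 2 * π * t ∈ I b) (h : Q.covRel θ φ) :
    Function.Bijective (V.map h) := by
  have hbars : ∀ b, Function.Bijective ((Wb b).map h) := by
    intro b
    obtain ⟨-, -, -, e, he, -⟩ := hbar b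
    refine (Function.bijective_iff_of_comm (e θ).toEquiv (e φ).toEquiv (he h)).2
      (bijective_barMapHom (fun β => ?_) (fun β => ?_))
    · have hβ := barIdx_val_eq (hI b) hθ β
      rw [show β.1 - θ + φ = φ - 2 * π * t by rw [hβ]; ring]
      exact (hmem b).1 (hβ ▸ β.2.1)
    · have hβ := barIdx_val_eq (hI b) hφ β
      rw [show β.1 - φ + θ = θ - 2 * π * t by rw [hβ]; ring]
      exact (hmem b).2 (hβ ▸ β.2.1)
  obtain ⟨e, he, -⟩ := hiso
  refine V.bijective_map_of_bijective_restrict _ h (fun z hz => ?_)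
    ((Function.bijective_iff_of_comm (e θ).toEquiv (e φ).toEquiv (he h)).2
      (bijective_dsum_map h hbars))
  refine ⟨-t, ?_⟩
  have : z - 2 * π * t ∈ uIcc (θ - 2 * π * t) (φ - 2 * π * t) := by
    rw [← image_sub_const_uIcc]
    exact mem_image_of_mem _ hz
  convert uIcc_subset_Icc hθ hφ this using 1
  push_cast
  ring

lemma finite_setOf_mem_of_barOn {B : Type} {Wb : B → SRep k Q} {I : B → Set ℝ}
    (hbar : ∀ b, BarOn (I b) (Wb b)) {θ : ℝ} [FiniteDimensional k ((dsum Wb).obj θ)] :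
    {b | θ ∈ I b}.Finite := by
  classical
  choose e he using fun b => (hbar b).2.2.2
  let u : ∀ b, PLift (θ ∈ I b) → (Wb b).obj θ := fun b hb =>
    (e b θ).symm (Finsupp.single ⟨θ, hb.down, 0, by simp⟩ 1)
  have hu : LinearIndependent k fun x : Σ b, PLift (θ ∈ I b) =>
      (DFinsupp.single x.1 (u x.1 x.2) : Π₀ b, (Wb b).obj θ) := by
    refine DFinsupp.linearIndependent_single u fun b =>
      (linearIndependent_subsingleton_index_iff _).2 fun hb => ?_
    exact (LinearEquiv.map_ne_zero_iff _).2 (Finsupp.single_ne_zero.2 one_ne_zero)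
  have : FiniteDimensional k (Π₀ b, (Wb b).obj θ) := ‹_›
  have : Finite (Σ b, PLift (θ ∈ I b)) := hu.finite
  exact (finite_range Sigma.fst).subset fun b hb =>
    ⟨(⟨b, PLift.up hb⟩ : Σ b, PLift (θ ∈ I b)), rfl⟩

def BijectiveOff (D : Set ℝ) : Prop :=
  ∀ ⦃θ φ : ℝ⦄ (h : Q.covRel θ φ), Disjoint D (uIcc θ φ) → Function.Bijective (V.map h)

variable {V}

lemma BijectiveOff.mono {D D' : Set ℝ} (hV : V.BijectiveOff D) (hD : D ⊆ D') :
    V.BijectiveOff D' :=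
  fun _ _ h hdisj => hV h (hdisj.mono_left hD)

lemma finite_of_bars {n : ℤ} (hpwf : V.Pwf) {B : Type} {Wb : B → SRep k Q} {I : B → Set ℝ}
    (hbars : ∀ b, BarOn (I b) (Wb b) ∧ I b ⊆ Icc (Q.α n) (Q.α (n + 1)) ∧
      (Q.α n ∈ I b ∨ Q.α (n + 1) ∈ I b))
    (hiso : RepIso (V.restrict (periodize (Icc (Q.α n) (Q.α (n + 1)))) (periodize_shift _))
      (dsum Wb)) : Finite B := by
  have hfin : ∀ θ ∈ Icc (Q.α n) (Q.α (n + 1)), {b | θ ∈ I b}.Finite := by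
    intro θ hθ
    have : Unique (PLift (θ ∈ periodize (Icc (Q.α n) (Q.α (n + 1))))) :=
      ⟨⟨⟨⟨0, by simpa using hθ⟩⟩⟩, fun _ => rfl⟩
    have := hpwf θ
    obtain ⟨e, -, -⟩ := hiso
    have := LinearEquiv.finiteDimensional ((LinearEquiv.funUnique _ k _).symm.trans (e θ))
    exact finite_setOf_mem_of_barOn fun b => (hbars b).1
  have hα : Q.α n ≤ Q.α (n + 1) := Q.mono.monotone (by omega)
  refine Set.finite_univ_iff.1 (((hfin _ ⟨le_rfl, hα⟩).union (hfin _ ⟨hα, le_rfl⟩)).subset ?_)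
  exact fun b _ => (hbars b).2.2

/-- The cut points: the `α n` and the ends of the bars of the arcs of a fundamental domain. -/
theorem Finitistic.exists_finite_bijectiveOff (hV : V.Finitistic) :
    ∃ F : Set ℝ, F.Finite ∧ range Q.α ⊆ periodize F ∧ V.BijectiveOff (periodize F) := by
  obtain ⟨hpwf, hbars⟩ := hV
  choose B Wb I hbar hiso using hbars
  have hB := fun n => finite_of_bars hpwf (hbar n) (hiso n)
  set P : ℤ := (Q.periodN : ℤ)
  have hP : 0 < P := Int.natCast_pos.2 Q.periodN_pos
  set E : ℤ → Set ℝ := fun n => range (fun b => sInf (I n b)) ∪ range (fun b => sSup (I n b))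
  set F := ⋃ n ∈ Ico 0 P, insert (Q.α n) (E n)
  have hEF : ∀ j, insert (Q.α (j % P)) (E (j % P)) ⊆ F := fun j =>
    subset_biUnion_of_mem (u := fun n => insert (Q.α n) (E n))
      ⟨Int.emod_nonneg j hP.ne', Int.emod_lt_of_pos j hP⟩
  have hαF : range Q.α ⊆ periodize F := by
    rintro _ ⟨j, rfl⟩
    rw [AtR.α_eq_α_emod_add]
    exact add_mul_mem_periodize (hEF j (mem_insert _ _)) _
  refine ⟨F, (finite_Ico 0 P).biUnion fun n _ =>
    ((finite_range _).union (finite_range _)).insert _, hαF, fun θ φ h hdisj => ?_⟩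
  obtain ⟨j, hθ, hφ⟩ := AtR.exists_mem_arc_of_disjoint (hdisj.mono_left hαF)
  set t := j / P
  -- a bar end in `[θ, φ] - 2πt` would be a cut point in `[θ, φ]`
  have hend : ∀ x ∈ E (j % P), x ∉ uIcc (θ - 2 * π * t) (φ - 2 * π * t) := fun x hx hxθφ => by
    refine disjoint_left.1 hdisj (add_mul_mem_periodize (hEF j (mem_insert_of_mem _ hx)) t) ?_
    rw [← sub_add_cancel θ (2 * π * t), ← sub_add_cancel φ (2 * π * t), ← image_add_const_uIcc]
    exact mem_image_of_mem _ hxθφ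
  refine V.bijective_map_of_bars (fun b => (hbar _ b).1) (fun b => (hbar _ b).2.1) (hiso _) t
    (AtR.sub_mem_arc_emod hθ) (AtR.sub_mem_arc_emod hφ) (fun b => ?_) h
  obtain ⟨-, -, hoc, -⟩ := (hbar _ b).1
  exact hoc.mem_iff_mem_of_notMem_uIcc (bddBelow_Icc.mono (hbar _ b).2.1)
    (bddAbove_Icc.mono (hbar _ b).2.1) (hend _ (Or.inl ⟨b, rfl⟩)) (hend _ (Or.inr ⟨b, rfl⟩))

end SRep

namespace CircPartition

variable {Q : AtR} (C : CircPartition Q)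

def Subordinate : Prop :=
  ∀ ⦃i j : ℤ⦄ ⦃θ : ℝ⦄, θ ∈ C.J i → θ ∈ Icc (Q.α j) (Q.α (j + 1)) →
    C.J i ⊆ Icc (Q.α j) (Q.α (j + 1))

variable {C}

lemma monotone_partIdx : Monotone C.partIdx := fun θ φ h =>
  le_of_not_gt fun hlt => (C.ordered hlt _ (C.mem_partIdx φ) _ (C.mem_partIdx θ)).not_ge h

variable {pt : ℤ → ℝ}

lemma monotone_of_mem (hmem : ∀ j, pt j ∈ C.J j) : Monotone pt := fun i j hij =>
  hij.eq_or_lt.elim (fun h => h ▸ le_rfl) fun h => (C.ordered h _ (hmem i) _ (hmem j)).le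

lemma pt_partIdx_add_two_pi (hper : ∀ j : ℤ, pt (j + (C.N : ℤ)) = pt j + 2 * π) (θ : ℝ) :
    pt (C.partIdx (θ + 2 * π)) = pt (C.partIdx θ) + 2 * π := by
  rw [C.partIdx_shift, hper]

lemma Subordinate.covRel_pt_partIdx (hsub : C.Subordinate) (hmem : ∀ j, pt j ∈ C.J j)
    {θ φ : ℝ} (h : Q.covRel θ φ) : Q.covRel (pt (C.partIdx θ)) (pt (C.partIdx φ)) :=
  AtR.covRel_apply_of_monotone ((monotone_of_mem hmem).comp monotone_partIdx)
    (fun _ θ hθ => hsub (C.mem_partIdx θ) hθ (hmem _)) h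

lemma Subordinate.covRel_or_covRel (hsub : C.Subordinate) {θ φ : ℝ}
    (hp : C.partIdx θ = C.partIdx φ) : Q.covRel θ φ ∨ Q.covRel φ θ := by
  obtain ⟨j, hj⟩ := AtR.exists_mem_arc (Q := Q) θ
  exact AtR.covRel_or_covRel hj (hsub (C.mem_partIdx θ) hj (hp ▸ C.mem_partIdx φ))

lemma Subordinate.covRel_pt_partIdx_of_not (hsub : C.Subordinate) (hmem : ∀ j, pt j ∈ C.J j)
    {θ : ℝ} (h : ¬ Q.covRel (pt (C.partIdx θ)) θ) : Q.covRel θ (pt (C.partIdx θ)) :=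
  (hsub.covRel_or_covRel (C.partIdx_eq (hmem _))).resolve_left h

end CircPartition

section CutPartition

variable {c : ℤ → ℝ}

def cutPart (c : ℤ → ℝ) (j : ℤ) : Set ℝ :=
  if Even j then {c (j / 2)} else Ioo (c (j / 2)) (c (j / 2 + 1))

lemma cutPart_two_mul (c : ℤ → ℝ) (i : ℤ) : cutPart c (2 * i) = {c i} := by
  simp [cutPart]

lemma cutPart_two_mul_add_one (c : ℤ → ℝ) (i : ℤ) :
    cutPart c (2 * i + 1) = Ioo (c i) (c (i + 1)) := by
  rw [cutPart, if_neg (Int.not_even_two_mul_add_one i), show (2 * i + 1) / 2 = i by omega]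

lemma nonempty_cutPart (hc : StrictMono c) (j : ℤ) : (cutPart c j).Nonempty := by
  obtain ⟨i, rfl | rfl⟩ := Int.even_or_odd' j
  · simp [cutPart_two_mul]
  · simpa [cutPart_two_mul_add_one] using hc (lt_add_one i)

lemma ordConnected_cutPart (c : ℤ → ℝ) (j : ℤ) : (cutPart c j).OrdConnected := by
  obtain ⟨i, rfl | rfl⟩ := Int.even_or_odd' j
  · simpa [cutPart_two_mul] using ordConnected_singleton
  · simpa [cutPart_two_mul_add_one] using ordConnected_Ioo

lemma cutPart_lt_cutPart_add_one {j : ℤ} {x y : ℝ} (hx : x ∈ cutPart c j)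
    (hy : y ∈ cutPart c (j + 1)) : x < y := by
  obtain ⟨i, rfl | rfl⟩ := Int.even_or_odd' j
  · rw [cutPart_two_mul] at hx
    rw [cutPart_two_mul_add_one] at hy
    exact hx ▸ hy.1
  · rw [cutPart_two_mul_add_one] at hx
    rw [show 2 * i + 1 + 1 = 2 * (i + 1) by ring, cutPart_two_mul] at hy
    exact hy ▸ hx.2

lemma cutPart_lt (hc : StrictMono c) {j j' : ℤ} (hjj' : j < j') {x y : ℝ}
    (hx : x ∈ cutPart c j) (hy : y ∈ cutPart c j') : x < y := by
  induction j', (hjj' : j + 1 ≤ j') using Int.leInduction generalizing y with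
  | base => exact cutPart_lt_cutPart_add_one hx hy
  | succ n _ ih =>
    obtain ⟨z, hz⟩ := nonempty_cutPart hc n
    exact (ih hz).trans (cutPart_lt_cutPart_add_one hz hy)

lemma exists_mem_cutPart (hc : StrictMono c) {K : ℕ} (hper : ∀ i, c (i + K) = c i + 2 * π)
    (x : ℝ) : ∃ j, x ∈ cutPart c j := by
  obtain ⟨i, hi, hi'⟩ := exists_apply_le_lt_apply_add_one_of_apply_add hc.monotone two_pi_pos hper x
  rcases hi.eq_or_lt with h | h
  · exact ⟨2 * i, by simp [cutPart_two_mul, h]⟩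
  · exact ⟨2 * i + 1, by simpa [cutPart_two_mul_add_one] using ⟨h, hi'⟩⟩

lemma mem_cutPart_iff_add_two_pi {K : ℕ} (hper : ∀ i, c (i + K) = c i + 2 * π) (j : ℤ)
    (x : ℝ) : x ∈ cutPart c j ↔ x + 2 * π ∈ cutPart c (j + (2 * K : ℕ)) := by
  obtain ⟨i, rfl | rfl⟩ := Int.even_or_odd' j
  · rw [show 2 * i + (2 * K : ℕ) = 2 * (i + K) by push_cast; ring, cutPart_two_mul,
      cutPart_two_mul, hper]
    simp
  · rw [show 2 * i + 1 + (2 * K : ℕ) = 2 * (i + K) + 1 by push_cast; ring,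
      cutPart_two_mul_add_one, cutPart_two_mul_add_one, add_right_comm, hper, hper]
    simp

def cutPartition (Q : AtR) (K : ℕ) (hK : 0 < K) (c : ℤ → ℝ) (hc : StrictMono c)
    (hper : ∀ i, c (i + K) = c i + 2 * π) : CircPartition Q where
  N := 2 * K
  hN := by omega
  J := cutPart c
  nonempty := nonempty_cutPart hc
  ordconn := ordConnected_cutPart c
  ordered h _ hx _ hy := cutPart_lt hc h hx hy
  cover := exists_mem_cutPart hc hper
  jper := mem_cutPart_iff_add_two_pi hper

/-- For even `j` both summands are `c (j / 2)`, so this is the cut point itself. -/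
def cutPt (c : ℤ → ℝ) (j : ℤ) : ℝ := (c (j / 2) + c ((j + 1) / 2)) / 2

lemma cutPt_mem_cutPart (hc : StrictMono c) (j : ℤ) : cutPt c j ∈ cutPart c j := by
  obtain ⟨i, rfl | rfl⟩ := Int.even_or_odd' j
  · simp [cutPt, cutPart_two_mul, show (2 * i + 1) / 2 = i by omega]
  · have := hc (lt_add_one i)
    rw [cutPart_two_mul_add_one, cutPt, show (2 * i + 1) / 2 = i by omega,
      show (2 * i + 1 + 1) / 2 = i + 1 by omega]
    constructor <;> linarith

lemma cutPt_add {K : ℕ} (hper : ∀ i, c (i + K) = c i + 2 * π) (j : ℤ) :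
    cutPt c (j + (2 * K : ℕ)) = cutPt c j + 2 * π := by
  rw [cutPt, cutPt, show (j + (2 * K : ℕ)) / 2 = j / 2 + K by omega,
    show (j + (2 * K : ℕ) + 1) / 2 = (j + 1) / 2 + K by omega, hper, hper]
  ring

lemma cutPartition_subordinate {Q : AtR} {K : ℕ} (hK : 0 < K) (hc : StrictMono c)
    (hper : ∀ i, c (i + K) = c i + 2 * π) (hα : range Q.α ⊆ range c) :
    (cutPartition Q K hK c hc hper).Subordinate := by
  intro i j θ hθi hθj
  change θ ∈ cutPart c i at hθi
  change cutPart c i ⊆ _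
  obtain ⟨i, rfl | rfl⟩ := Int.even_or_odd' i
  · rw [cutPart_two_mul] at hθi ⊢
    exact singleton_subset_iff.2 (hθi ▸ hθj)
  · rw [cutPart_two_mul_add_one] at hθi ⊢
    have hcut : ∀ n, Q.α n ∉ Ioo (c i) (c (i + 1)) := fun n hn => by
      obtain ⟨l, hl⟩ := hα ⟨n, rfl⟩
      exact hc.monotone.ne_of_lt_of_lt_int i (hl ▸ hn.1) (hl ▸ hn.2) l rfl
    have h₁ : Q.α j ≤ c i := le_of_not_gt fun h => hcut j ⟨h, hθj.1.trans_lt hθi.2⟩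
    have h₂ : c (i + 1) ≤ Q.α (j + 1) :=
      le_of_not_gt fun h => hcut (j + 1) ⟨hθi.1.trans_le hθj.2, h⟩
    exact Ioo_subset_Icc_self.trans (Icc_subset_Icc h₁ h₂)

lemma SRep.BijectiveOff.bijective_map_of_mem_cutPart {k : Type} [Field k] {Q : AtR}
    {V : SRep k Q} (hV : V.BijectiveOff (range c)) (hc : StrictMono c) {j : ℤ} {θ φ : ℝ}
    (hθ : θ ∈ cutPart c j) (hφ : φ ∈ cutPart c j) (h : Q.covRel θ φ) :
    Function.Bijective (V.map h) := by
  obtain ⟨i, rfl | rfl⟩ := Int.even_or_odd' j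
  · rw [cutPart_two_mul] at hθ hφ
    obtain rfl : θ = φ := hθ.trans hφ.symm
    rw [V.map_id]
    exact Function.bijective_id
  · rw [cutPart_two_mul_add_one] at hθ hφ
    refine hV h (disjoint_left.2 ?_)
    rintro _ ⟨l, rfl⟩ hl
    have := ordConnected_Ioo.uIcc_subset hθ hφ hl
    exact hc.monotone.ne_of_lt_of_lt_int i this.1 this.2 l rfl

end CutPartition

namespace SRep

variable {k : Type} [Field k] {Q : AtR} (V : SRep k Q) {C : CircPartition Q} {pt : ℤ → ℝ}

def refinement (hper : ∀ j : ℤ, pt (j + (C.N : ℤ)) = pt j + 2 * π) (hmem : ∀ j, pt j ∈ C.J j)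
    (hsub : C.Subordinate) : SRep k Q where
  obj θ := V.obj (pt (C.partIdx θ))
  map h := V.map (hsub.covRel_pt_partIdx hmem h)
  map_id _ _ := V.map_id _ _
  map_comp _ _ _ := V.map_comp _ _ _
  per θ := (V.castO (C.pt_partIdx_add_two_pi hper θ)).trans (V.per _)
  per_map {θ φ} h h' := LinearMap.ext fun v => by
    simp only [LinearMap.comp_apply, LinearEquiv.coe_coe, LinearEquiv.trans_apply]
    rw [V.per_map_apply _ (AtR.covRel_add_two_pi.2 (hsub.covRel_pt_partIdx hmem h)),
      V.map_castO _ _ (hsub.covRel_pt_partIdx hmem h')]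

section BackEquiv

variable (hmem : ∀ j, pt j ∈ C.J j) (hsub : C.Subordinate)
  (hbij : ∀ {θ φ : ℝ} (h : Q.covRel θ φ), C.partIdx θ = C.partIdx φ → Function.Bijective (V.map h))

open Classical in
def backEquiv (θ : ℝ) : V.obj (pt (C.partIdx θ)) ≃ₗ[k] V.obj θ :=
  if h : Q.covRel (pt (C.partIdx θ)) θ then
    LinearEquiv.ofBijective _ (hbij h (C.partIdx_eq (hmem _)))
  else
    (LinearEquiv.ofBijective _
      (hbij (hsub.covRel_pt_partIdx_of_not hmem h) (C.partIdx_eq (hmem _)).symm)).symm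

lemma backEquiv_of_covRel {θ : ℝ} (h : Q.covRel (pt (C.partIdx θ)) θ) (v : V.obj _) :
    V.backEquiv hmem hsub hbij θ v = V.map h v := by
  rw [backEquiv, dif_pos h]
  rfl

lemma map_backEquiv {θ : ℝ} (h : Q.covRel θ (pt (C.partIdx θ))) (v : V.obj _) :
    V.map h (V.backEquiv hmem hsub hbij θ v) = v := by
  unfold backEquiv
  split_ifs with h'
  · exact (V.map_map h' h v).trans (V.map_self _ v)
  · exact LinearEquiv.apply_symm_apply (LinearEquiv.ofBijective _ _) v

lemma backEquiv_map {x θ : ℝ} (g : Q.covRel x (pt (C.partIdx θ))) (g' : Q.covRel x θ)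
    (w : V.obj x) : V.backEquiv hmem hsub hbij θ (V.map g w) = V.map g' w := by
  by_cases h : Q.covRel (pt (C.partIdx θ)) θ
  · rw [backEquiv_of_covRel _ _ _ _ h, map_map]
  · have h' := hsub.covRel_pt_partIdx_of_not hmem h
    apply (hbij h' (C.partIdx_eq (hmem _)).symm).injective
    rw [map_backEquiv, map_map]

lemma backEquiv_map_self {θ : ℝ} (h : Q.covRel θ (pt (C.partIdx θ))) (w : V.obj θ) :
    V.backEquiv hmem hsub hbij θ (V.map h w) = w := by
  rw [backEquiv_map _ _ _ _ h (AtR.covRel_refl θ), map_self]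

lemma backEquiv_map_covRel_pt_partIdx {θ φ : ℝ} (h : Q.covRel θ φ) (v : V.obj _) :
    V.backEquiv hmem hsub hbij φ (V.map (hsub.covRel_pt_partIdx hmem h) v)
      = V.map h (V.backEquiv hmem hsub hbij θ v) := by
  by_cases hθ : Q.covRel (pt (C.partIdx θ)) θ
  · rw [backEquiv_of_covRel _ _ _ _ hθ, map_map, backEquiv_map _ _ _ _ _ (AtR.covRel_trans hθ h)]
  · have hθ' := hsub.covRel_pt_partIdx_of_not hmem hθ
    obtain ⟨w, rfl⟩ := (hbij hθ' (C.partIdx_eq (hmem _)).symm).surjective v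
    rw [map_map, backEquiv_map _ _ _ _ _ h, backEquiv_map_self]

lemma backEquiv_per (hper : ∀ j : ℤ, pt (j + (C.N : ℤ)) = pt j + 2 * π) (θ : ℝ) (v : V.obj _) :
    V.backEquiv hmem hsub hbij θ ((V.refinement hper hmem hsub).per θ v)
      = V.per θ (V.backEquiv hmem hsub hbij (θ + 2 * π) v) := by
  have e := C.pt_partIdx_add_two_pi hper θ
  change V.backEquiv hmem hsub hbij θ (V.per _ (V.castO e v)) = _
  by_cases hθ : Q.covRel (pt (C.partIdx θ)) θ
  · have hθ' : Q.covRel (pt (C.partIdx (θ + 2 * π))) (θ + 2 * π) := by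
      rw [e]
      exact AtR.covRel_add_two_pi.2 hθ
    rw [backEquiv_of_covRel _ _ _ _ hθ, backEquiv_of_covRel _ _ _ _ hθ',
      V.per_map_apply hθ (AtR.covRel_add_two_pi.2 hθ), V.map_castO e rfl hθ']
    rfl
  · have hθ' := hsub.covRel_pt_partIdx_of_not hmem hθ
    have hθ'' : Q.covRel (θ + 2 * π) (pt (C.partIdx (θ + 2 * π))) := by
      rw [e]
      exact AtR.covRel_add_two_pi.2 hθ'
    obtain ⟨w, rfl⟩ := (hbij hθ'' (C.partIdx_eq (hmem _)).symm).surjective v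
    rw [backEquiv_map_self, ← V.map_castO rfl e hθ'' (AtR.covRel_add_two_pi.2 hθ'),
      ← V.per_map_apply hθ', backEquiv_map_self]
    rfl

end BackEquiv

theorem exists_refinementOf_repIso (hper : ∀ j : ℤ, pt (j + (C.N : ℤ)) = pt j + 2 * π)
    (hmem : ∀ j, pt j ∈ C.J j) (hsub : C.Subordinate)
    (hbij : ∀ {θ φ : ℝ} (h : Q.covRel θ φ), C.partIdx θ = C.partIdx φ →
      Function.Bijective (V.map h)) :
    ∃ U : SRep k Q, RefinementOf V C pt hper U ∧ RepIso U V :=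
  ⟨V.refinement hper hmem hsub,
    ⟨hmem, fun _ => LinearEquiv.refl k _, fun _ hp v => V.map_eq_castO (congrArg pt hp) _ v,
      fun _ _ _ => rfl, fun _ _ => rfl⟩,
    ⟨V.backEquiv hmem hsub hbij, V.backEquiv_map_covRel_pt_partIdx hmem hsub hbij,
      V.backEquiv_per hmem hsub hbij hper⟩⟩

end SRep

/-- A finitistic representation `V` admits a finite partition of the circle into
path-connected parts with representative points such that (a) `V` maps within a
part are isomorphisms and (b) the associated refinement of `V` is isomorphic
to `V`. -/
theorem refinement_exists {k : Type} [Field k] {Q : AtR} (V : SRep k Q)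
    (hfin : SRep.Finitistic V) :
    ∃ (C : CircPartition Q) (pt : ℤ → ℝ)
      (hper : ∀ j : ℤ, pt (j + (C.N : ℤ)) = pt j + 2 * Real.pi),
      (∀ j, pt j ∈ C.J j) ∧
      (∀ {θ φ : ℝ} (h : Q.covRel θ φ), C.partIdx θ = C.partIdx φ →
        Function.Bijective (V.map h)) ∧
      ∃ U : SRep k Q, SRep.RefinementOf V C pt hper U ∧ SRep.RepIso U V := by
  obtain ⟨F, hF, hαF, hV⟩ := hfin.exists_finite_bijectiveOff
  obtain ⟨j, hj⟩ := hαF ⟨0, rfl⟩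
  obtain ⟨K, hK, c, hc, hper, hFc⟩ := exists_strictMono_periodize_subset_range hF ⟨_, hj⟩
  let C := cutPartition Q K hK c hc hper
  have hmem : ∀ j, cutPt c j ∈ C.J j := cutPt_mem_cutPart hc
  have hsub : C.Subordinate := cutPartition_subordinate hK hc hper (hαF.trans hFc)
  have hbij : ∀ {θ φ : ℝ} (h : Q.covRel θ φ), C.partIdx θ = C.partIdx φ →
      Function.Bijective (V.map h) := fun h hp =>
    (hV.mono hFc).bijective_map_of_mem_cutPart hc (C.mem_partIdx _) (hp ▸ C.mem_partIdx _) h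
  exact ⟨C, cutPt c, cutPt_add hper, hmem, hbij,
    V.exists_refinementOf_repIso (cutPt_add hper) hmem hsub hbij⟩
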